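/- (Lemma 4.2) Suppose condition (1.5) holds. Then ∫_ℝ |∂G(x,t)/∂x| dt = |u'(x)|·∫_{−∞}^x v(t) dt + v'(x)·∫_x^∞ u(t) dt → 0 as |x| → ∞. -/

import Mathlib

open MeasureTheory Filter Real Set
open scoped ENNReal

noncomputable section

/-- Condition (1.5): for every `a > 0`, `∫_{x-a}^{x+a} q(t) dt → ∞` as `|x| → ∞`. -/
def Cond15 (q : ℝ → ℝ) : Prop :=
  ∀ a : ℝ, 0 < a → Tendsto (fun x => ∫ t in (x - a)..(x + a), q t) (cocompact ℝ) atTop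

/-- `(u, v)` is a principal fundamental system of solutions (PFSS) of `z'' = q z`.
Local absolute continuity of `u'` together with `u'' = q u` a.e. is encoded via the
fundamental theorem of calculus: `u' b - u' a = ∫_a^b q t * u t dt` for all `a, b`. -/
def IsPFSS (q u v : ℝ → ℝ) : Prop :=
  ContDiff ℝ 1 u ∧ ContDiff ℝ 1 v ∧
  (∀ a b : ℝ, deriv u b - deriv u a = ∫ t in a..b, q t * u t) ∧
  (∀ a b : ℝ, deriv v b - deriv v a = ∫ t in a..b, q t * v t) ∧
  (∀ x, 0 < u x) ∧ (∀ x, 0 < v x) ∧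
  (∀ x, deriv u x < 0) ∧ (∀ x, 0 < deriv v x) ∧
  (∀ x, deriv v x * u x - deriv u x * v x = 1) ∧
  (∀ x, u x = v x * ∫ t in Set.Ioi x, ((v t) ^ 2)⁻¹) ∧
  Tendsto u atTop (nhds 0) ∧ Tendsto (deriv u) atTop (nhds 0) ∧
  Tendsto v atTop atTop ∧ Tendsto (deriv v) atTop atTop ∧
  Tendsto v atBot (nhds 0) ∧ Tendsto (deriv v) atBot (nhds 0) ∧
  Tendsto u atBot atTop ∧ Tendsto (fun x => |deriv u x|) atBot atTop

/-- The Green function: `G(x,t) = u(x) v(t)` for `x ≥ t`, `G(x,t) = u(t) v(x)` for `x ≤ t`. -/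
def GreenFn (u v : ℝ → ℝ) (x t : ℝ) : ℝ := if x ≤ t then u t * v x else u x * v t

/-- The Green operator `(Gf)(x) = ∫_ℝ G(x,t) f(t) dt`. -/
def GreenOp (u v f : ℝ → ℝ) (x : ℝ) : ℝ := ∫ t, GreenFn u v x t * f t

/-! The Wronskian identity gives `|u'| v ≤ 1` and `v' u ≤ 1`, so it suffices that
`(∫_x^∞ u) / u(x) → 0` and `(∫_{-∞}^x v) / v(x) → 0` as `|x| → ∞`; the second statement is
the first one for the positive decreasing solution `x ↦ v(-x)` of the reflected equation.

For a positive decreasing solution `w` of `w'' = q w`, convexity gives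
`(h/2) (∫_{t+h/2}^{t+h} q) w(t+h) ≤ w(t)`, so by (1.5) `w` halves over every step of length `h`
far enough out, and then `∫_x^y w ≤ 2h w(x)` there. Towards `-∞` the remaining part
`∫_{x₁}^∞ w` is a constant, negligible against `w(x) → ∞`. -/

open Topology

theorem integral_le_two_mul_of_halving {w : ℝ → ℝ} (hwc : Continuous w) (hw : Antitone w)
    (hw0 : ∀ t, 0 ≤ w t) {h x y : ℝ} (hh : 0 ≤ h) (hxy : x ≤ y)
    (hhalf : ∀ t ∈ Icc x (y - h), w (t + h) ≤ w t / 2) :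
    ∫ t in x..y, w t ≤ 2 * h * w x := by
  have hconst : ∀ b, x ≤ b → ∫ t in x..b, w t ≤ (b - x) * w x := fun b hb => by
    simpa using intervalIntegral.integral_mono_on hb (hwc.intervalIntegrable (μ := volume) _ _)
      intervalIntegrable_const fun t ht => hw ht.1
  rcases le_or_gt y (x + h) with hy | hy
  · nlinarith [hconst y hxy, hw0 x]
  have hsplit := intervalIntegral.integral_add_adjacent_intervals
    (hwc.intervalIntegrable (μ := volume) x (x + h)) (hwc.intervalIntegrable (x + h) y)
  have hshift : ∫ t in x + h..y, w t = ∫ t in x..y - h, w (t + h) := by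
    rw [intervalIntegral.integral_comp_add_right, sub_add_cancel, add_comm]
  have hhalved : ∫ t in x..y - h, w (t + h) ≤ (∫ t in x..y - h, w t) / 2 := by
    rw [← intervalIntegral.integral_div]
    exact intervalIntegral.integral_mono_on (by linarith)
      ((hwc.comp (continuous_add_const h)).intervalIntegrable _ _)
      ((hwc.div_const 2).intervalIntegrable _ _) hhalf
  have hshorter : ∫ t in x..y - h, w t ≤ ∫ t in x..y, w t :=
    intervalIntegral.integral_mono_interval le_rfl (by linarith) (by linarith)
      (Eventually.of_forall hw0) (hwc.intervalIntegrable _ _)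
  nlinarith [hconst (x + h) (by linarith), hw0 x]

structure IsDecreasingSolution (q w : ℝ → ℝ) : Prop where
  contDiff : ContDiff ℝ 1 w
  deriv_sub_deriv : ∀ a b, deriv w b - deriv w a = ∫ t in a..b, q t * w t
  pos : ∀ x, 0 < w x
  deriv_neg : ∀ x, deriv w x < 0

namespace IsDecreasingSolution

variable {q w : ℝ → ℝ} (hw : IsDecreasingSolution q w)
include hw

theorem differentiable : Differentiable ℝ w := hw.contDiff.differentiable one_ne_zero

theorem continuous : Continuous w := hw.differentiable.continuous

theorem antitone : Antitone w :=
  antitone_of_deriv_nonpos hw.differentiable fun x => (hw.deriv_neg x).le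

theorem monotone_deriv (hq : ∀ x, 0 ≤ q x) : Monotone (deriv w) := fun a b hab => by
  have := hw.deriv_sub_deriv a b
  have : 0 ≤ ∫ t in a..b, q t * w t :=
    intervalIntegral.integral_nonneg hab fun t _ => mul_nonneg (hq t) (hw.pos t).le
  linarith

theorem sub_mul_neg_deriv_le (hq : ∀ x, 0 ≤ q x) {s t : ℝ} (hst : s ≤ t) :
    (t - s) * -deriv w t ≤ w s - w t := by
  have := (convex_Icc s t).image_sub_le_mul_sub_of_deriv_le hw.continuous.continuousOn
    hw.differentiable.differentiableOn (fun x hx => hw.monotone_deriv hq (interior_subset hx).2)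
    s (left_mem_Icc.2 hst) t (right_mem_Icc.2 hst) hst
  linarith

theorem tendsto_atBot (hq : ∀ x, 0 ≤ q x) : Tendsto w atBot atTop := by
  refine tendsto_atTop_mono' atBot ?_ <|
    (tendsto_atTop_add_const_right _ (w 0) ((tendsto_neg_atBot_atTop).atTop_mul_const
      (neg_pos.2 (hw.deriv_neg 0))))
  filter_upwards [eventually_le_atBot 0] with s hs
  nlinarith [hw.sub_mul_neg_deriv_le hq hs]

theorem mul_integral_mul_le (hq : ∀ x, 0 ≤ q x) (hq_int : ∀ a b, IntervalIntegrable q volume a b)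
    {s t r : ℝ} (hst : s ≤ t) (htr : t ≤ r) :
    (t - s) * (∫ x in t..r, q x) * w r ≤ w s := by
  have hqw : (∫ x in t..r, q x) * w r ≤ -deriv w t := by
    rw [← intervalIntegral.integral_mul_const]
    have := intervalIntegral.integral_mono_on htr ((hq_int t r).mul_const (w r))
      ((hq_int t r).mul_continuousOn hw.continuous.continuousOn)
      fun x hx => mul_le_mul_of_nonneg_left (hw.antitone hx.2) (hq x)
    linarith [hw.deriv_sub_deriv t r, hw.deriv_neg r]
  calc (t - s) * (∫ x in t..r, q x) * w r ≤ (t - s) * -deriv w t := by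
        rw [mul_assoc]; exact mul_le_mul_of_nonneg_left hqw (by linarith)
    _ ≤ w s := by linarith [hw.sub_mul_neg_deriv_le hq hst, hw.pos t]

theorem eventually_halving (hq : ∀ x, 0 ≤ q x) (hq_int : ∀ a b, IntervalIntegrable q volume a b)
    (h15 : Cond15 q) {h : ℝ} (hh : 0 < h) : ∀ᶠ t in cocompact ℝ, w (t + h) ≤ w t / 2 := by
  have hshift : Tendsto (· + 3 * h / 4) (cocompact ℝ) (cocompact ℝ) :=
    (Homeomorph.addRight _).isClosedEmbedding.tendsto_cocompact
  filter_upwards [hshift.eventually ((h15 (h / 4) (by positivity)).eventually_ge_atTop (4 / h))]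
    with t ht
  -- the window `[t + h/2, t + h]` is centred at `t + 3h/4`
  rw [show t + 3 * h / 4 - h / 4 = t + h / 2 by ring,
    show t + 3 * h / 4 + h / 4 = t + h by ring] at ht
  have hstep := hw.mul_integral_mul_le hq hq_int (s := t) (t := t + h / 2) (r := t + h)
    (by linarith) (by linarith)
  have : 2 * w (t + h) ≤ (t + h / 2 - t) * (∫ x in t + h / 2..t + h, q x) * w (t + h) := by
    refine mul_le_mul_of_nonneg_right ?_ (hw.pos _).le
    calc (2 : ℝ) = h / 2 * (4 / h) := by field_simp; norm_num
      _ ≤ _ := by rw [add_sub_cancel_left]; gcongr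
  linarith

theorem integrableOn_Ioi (hq : ∀ x, 1 ≤ q x) (hq_int : ∀ a b, IntervalIntegrable q volume a b)
    (x : ℝ) : IntegrableOn w (Ioi x) := by
  refine integrableOn_Ioi_of_intervalIntegral_norm_bounded (-deriv w x) x
    (fun y => hw.continuous.integrableOn_Icc.mono_set Ioc_subset_Icc_self) tendsto_id ?_
  filter_upwards [eventually_ge_atTop x] with y hxy
  calc ∫ t in x..y, ‖w t‖ = ∫ t in x..y, w t :=
        intervalIntegral.integral_congr fun t _ => Real.norm_of_nonneg (hw.pos t).le
    _ ≤ ∫ t in x..y, q t * w t :=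
        intervalIntegral.integral_mono_on hxy (hw.continuous.intervalIntegrable _ _)
          ((hq_int x y).mul_continuousOn hw.continuous.continuousOn)
          fun t _ => le_mul_of_one_le_left (hw.pos t).le (hq t)
    _ ≤ -deriv w x := by linarith [hw.deriv_sub_deriv x y, hw.deriv_neg y]

theorem tendsto_integral_Ioi_div (hq : ∀ x, 1 ≤ q x)
    (hq_int : ∀ a b, IntervalIntegrable q volume a b) (h15 : Cond15 q) :
    Tendsto (fun x => (∫ t in Ioi x, w t) / w x) (cocompact ℝ) (𝓝 0) := by
  have hq0 : ∀ x, 0 ≤ q x := fun x => zero_le_one.trans (hq x)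
  have hint := hw.integrableOn_Ioi hq hq_int
  refine tendsto_order.2 ⟨fun a ha => Eventually.of_forall fun x =>
    ha.trans_le (div_nonneg (setIntegral_nonneg measurableSet_Ioi fun t _ => (hw.pos t).le)
      (hw.pos x).le), fun ε hε => ?_⟩
  have hhalf := hw.eventually_halving hq0 hq_int h15 (h := ε / 4) (by positivity)
  rw [cocompact_eq_atBot_atTop, eventually_sup, eventually_atBot, eventually_atTop] at hhalf
  rw [cocompact_eq_atBot_atTop, eventually_sup]
  obtain ⟨⟨R₁, hR₁⟩, ⟨R₂, hR₂⟩⟩ := hhalf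
  have hbound : ∀ x y, x ≤ y → (∀ t ∈ Icc x (y - ε / 4), t ≤ R₁ ∨ R₂ ≤ t) →
      ∫ t in x..y, w t ≤ ε / 2 * w x := fun x y hxy hR => by
    have := integral_le_two_mul_of_halving hw.continuous hw.antitone (fun t => (hw.pos t).le)
      (h := ε / 4) (by positivity) hxy fun t ht => (hR t ht).elim (hR₁ t) (hR₂ t)
    linarith
  constructor
  · set C := ∫ t in Ioi R₁, w t
    filter_upwards [eventually_le_atBot R₁, (hw.tendsto_atBot hq0).eventually_gt_atTop (2 * C / ε)]
      with x hx hCx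
    have hsplit := intervalIntegral.integral_interval_add_Ioi (hint x) (hint R₁)
    have hle := hbound x R₁ hx fun t ht => Or.inl (by linarith [ht.2])
    rw [div_lt_iff₀ hε] at hCx
    rw [div_lt_iff₀ (hw.pos x)]
    linarith
  · filter_upwards [eventually_ge_atTop R₂] with x hx
    have hle : ∫ t in Ioi x, w t ≤ ε / 2 * w x :=
      le_of_tendsto (intervalIntegral_tendsto_integral_Ioi x (hint x) tendsto_id)
        (eventually_ge_atTop x |>.mono fun y hy => hbound x y hy fun t ht => Or.inr (hx.trans ht.1))
    rw [div_lt_iff₀ (hw.pos x)]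
    nlinarith [hw.pos x]

end IsDecreasingSolution

theorem tendsto_neg_cocompact {G : Type*} [TopologicalSpace G] [InvolutiveNeg G]
    [ContinuousNeg G] : Tendsto (fun x : G => -x) (cocompact G) (cocompact G) :=
  (Homeomorph.neg G).isClosedEmbedding.tendsto_cocompact

theorem Cond15.comp_neg {q : ℝ → ℝ} (h15 : Cond15 q) : Cond15 fun x => q (-x) := fun a ha => by
  refine ((h15 a ha).comp tendsto_neg_cocompact).congr fun x => ?_
  rw [Function.comp_apply, intervalIntegral.integral_comp_neg]
  congr 1 <;> ring

theorem mul_le_div_of_mul_le_one {a b c : ℝ} (hb : 0 ≤ b) (hc : 0 < c) (habc : a * c ≤ 1) :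
    a * b ≤ b / c := by
  rw [le_div_iff₀ hc]
  nlinarith

namespace IsPFSS

variable {q u v : ℝ → ℝ} (huv : IsPFSS q u v)
include huv

theorem isDecreasingSolution_fst : IsDecreasingSolution q u :=
  let ⟨hu, _, hu'', _, hu_pos, _, hu'_neg, _⟩ := huv
  ⟨hu, hu'', hu_pos, hu'_neg⟩

theorem isDecreasingSolution_snd_comp_neg :
    IsDecreasingSolution (fun x => q (-x)) (fun x => v (-x)) := by
  obtain ⟨-, hv, -, hv'', -, hv_pos, -, hv'_pos, -⟩ := huv
  refine ⟨hv.comp contDiff_neg, fun a b => ?_, fun x => hv_pos _, fun x => ?_⟩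
  · rw [deriv_comp_neg, deriv_comp_neg, intervalIntegral.integral_comp_neg (fun x => q x * v x)]
    linarith [hv'' (-b) (-a)]
  · simpa [deriv_comp_neg] using hv'_pos (-x)

theorem tendsto_integral_Iic_div_snd (hq : ∀ x, 1 ≤ q x)
    (hq_int : ∀ a b, IntervalIntegrable q volume a b) (h15 : Cond15 q) :
    Tendsto (fun x => (∫ t in Iic x, v t) / v x) (cocompact ℝ) (𝓝 0) := by
  have hq_int_neg (a b : ℝ) : IntervalIntegrable (fun x => q (-x)) volume a b := by
    simpa using (IntervalIntegrable.iff_comp_neg (f := q)).1 (hq_int (-a) (-b))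
  have := (huv.isDecreasingSolution_snd_comp_neg.tendsto_integral_Ioi_div (fun x => hq (-x))
    hq_int_neg h15.comp_neg).comp tendsto_neg_cocompact
  simpa [Function.comp_def] using this

theorem abs_deriv_fst_mul_snd_le (x : ℝ) : |deriv u x| * v x ≤ 1 := by
  obtain ⟨-, -, -, -, hu_pos, -, hu'_neg, hv'_pos, hW, -⟩ := huv
  rw [abs_of_neg (hu'_neg x)]
  nlinarith [hW x, mul_pos (hv'_pos x) (hu_pos x)]

theorem deriv_snd_mul_fst_le (x : ℝ) : deriv v x * u x ≤ 1 := by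
  obtain ⟨-, -, -, -, -, hv_pos, hu'_neg, -, hW, -⟩ := huv
  nlinarith [hW x, mul_pos (neg_pos.2 (hu'_neg x)) (hv_pos x)]

end IsPFSS

theorem lemma_4_2 (q u v : ℝ → ℝ) (hq_loc : LocallyIntegrable q) (hq : ∀ x, 1 ≤ q x)
    (huv : IsPFSS q u v) (h15 : Cond15 q) :
    Tendsto (fun x : ℝ =>
        |deriv u x| * (∫ t in Set.Iic x, v t) + deriv v x * (∫ t in Set.Ioi x, u t))
      (cocompact ℝ) (nhds 0) := by
  have hq_int (a b : ℝ) : IntervalIntegrable q volume a b :=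
    (hq_loc.integrableOn_isCompact isCompact_uIcc).intervalIntegrable
  have hU := huv.isDecreasingSolution_fst.tendsto_integral_Ioi_div hq hq_int h15
  have hV := huv.tendsto_integral_Iic_div_snd hq hq_int h15
  have hW₁ := huv.abs_deriv_fst_mul_snd_le
  have hW₂ := huv.deriv_snd_mul_fst_le
  obtain ⟨-, -, -, -, hu_pos, hv_pos, -, hv'_pos, -⟩ := huv
  have hIv (x : ℝ) : 0 ≤ ∫ t in Iic x, v t :=
    setIntegral_nonneg measurableSet_Iic fun t _ => (hv_pos t).le
  have hIu (x : ℝ) : 0 ≤ ∫ t in Ioi x, u t :=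
    setIntegral_nonneg measurableSet_Ioi fun t _ => (hu_pos t).le
  refine tendsto_of_tendsto_of_tendsto_of_le_of_le tendsto_const_nhds (by simpa using hV.add hU)
    (fun x => ?_) (fun x => ?_)
  · exact add_nonneg (mul_nonneg (abs_nonneg _) (hIv x)) (mul_nonneg (hv'_pos x).le (hIu x))
  · exact add_le_add
      (mul_le_div_of_mul_le_one (hIv x) (hv_pos x) (hW₁ x))
      (mul_le_div_of_mul_le_one (hIu x) (hu_pos x) (hW₂ x))
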